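/- arXiv:1701.06116 — 3 statements merged into one kernel-verified Lean document; each statement's English description precedes it below -/
import Mathlib

section
/- Let X, Y, Z be Banach spaces over ℝ (or ℂ), R ∈ L(Z, X), O ∈ L(Z, Y), and let C₀ > 0, ε₀ > 0. Suppose that for each x* ∈ X* there exists y* ∈ Y* such that (1/C₀)‖y*‖²_{Y*} + (1/ε₀)‖R*x* − O*y*‖²_{Z*} ≤ ‖x*‖²_{X*}. Then for every z ∈ Z, ‖Rz‖²_X ≤ C₀‖Oz‖²_Y + ε₀‖z‖²_Z. -/
/-!
Take a norming functional `x*` for `Rz` and the `y*` the hypothesis provides. Splitting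
`x*(Rz) = (R*x* − O*y*) z + y*(Oz)` bounds `‖Rz‖` by `‖y*‖‖Oz‖ + ‖R*x* − O*y*‖‖z‖`, and the
weighted Cauchy–Schwarz inequality with weights `C₀`, `ε₀` turns the square of this bound into
`(‖y*‖²/C₀ + ‖R*x* − O*y*‖²/ε₀)(C₀‖Oz‖² + ε₀‖z‖²) ≤ C₀‖Oz‖² + ε₀‖z‖²`.
-/

theorem sq_mul_add_mul_le_weighted {a b c d C ε : ℝ} (hC : 0 < C) (hε : 0 < ε) :
    (a * b + c * d) ^ 2 ≤ (a ^ 2 / C + c ^ 2 / ε) * (C * b ^ 2 + ε * d ^ 2) := by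
  have expand : (a ^ 2 / C + c ^ 2 / ε) * (C * b ^ 2 + ε * d ^ 2)
      = (a * b) ^ 2 + (c * d) ^ 2 + (ε / C * (a * d) ^ 2 + C / ε * (c * b) ^ 2) := by
    field_simp
    ring
  have am_gm : 2 * (a * b) * (c * d) ≤ ε / C * (a * d) ^ 2 + C / ε * (c * b) ^ 2 := by
    have key : 0 ≤ (ε * (a * d) - C * (c * b)) ^ 2 / (C * ε) := by positivity
    have : (ε * (a * d) - C * (c * b)) ^ 2 / (C * ε)
        = ε / C * (a * d) ^ 2 + C / ε * (c * b) ^ 2 - 2 * (a * b) * (c * d) := by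
      field_simp
      ring
    linarith
  rw [expand]
  nlinarith

section Duality

variable {𝕜 X Y Z : Type*} [NontriviallyNormedField 𝕜]
  [NormedAddCommGroup X] [NormedSpace 𝕜 X] [NormedAddCommGroup Y] [NormedSpace 𝕜 Y]
  [NormedAddCommGroup Z] [NormedSpace 𝕜 Z]

theorem norm_apply_le_of_comp_sub_comp (R : Z →L[𝕜] X) (O : Z →L[𝕜] Y)
    (x' : X →L[𝕜] 𝕜) (y' : Y →L[𝕜] 𝕜) (z : Z) :
    ‖x' (R z)‖ ≤ ‖y'‖ * ‖O z‖ + ‖x'.comp R - y'.comp O‖ * ‖z‖ :=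
  calc ‖x' (R z)‖ = ‖(x'.comp R - y'.comp O) z + y' (O z)‖ := by simp
    _ ≤ ‖x'.comp R - y'.comp O‖ * ‖z‖ + ‖y'‖ * ‖O z‖ :=
      norm_add_le_of_le ((x'.comp R - y'.comp O).le_opNorm z) (y'.le_opNorm (O z))
    _ = ‖y'‖ * ‖O z‖ + ‖x'.comp R - y'.comp O‖ * ‖z‖ := add_comm _ _

theorem sq_norm_apply_le_of_observability (R : Z →L[𝕜] X) (O : Z →L[𝕜] Y)
    {C ε : ℝ} (hC : 0 < C) (hε : 0 < ε) (x' : X →L[𝕜] 𝕜) (y' : Y →L[𝕜] 𝕜)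
    (hy' : ‖y'‖ ^ 2 / C + ‖x'.comp R - y'.comp O‖ ^ 2 / ε ≤ ‖x'‖ ^ 2) (z : Z) :
    ‖x' (R z)‖ ^ 2 ≤ ‖x'‖ ^ 2 * (C * ‖O z‖ ^ 2 + ε * ‖z‖ ^ 2) :=
  calc ‖x' (R z)‖ ^ 2
      ≤ (‖y'‖ * ‖O z‖ + ‖x'.comp R - y'.comp O‖ * ‖z‖) ^ 2 := by
        gcongr
        exact norm_apply_le_of_comp_sub_comp R O x' y' z
    _ ≤ (‖y'‖ ^ 2 / C + ‖x'.comp R - y'.comp O‖ ^ 2 / ε) * (C * ‖O z‖ ^ 2 + ε * ‖z‖ ^ 2) :=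
        sq_mul_add_mul_le_weighted hC hε
    _ ≤ ‖x'‖ ^ 2 * (C * ‖O z‖ ^ 2 + ε * ‖z‖ ^ 2) := by gcongr

end Duality

/-- If for each `x* ∈ X*` there is `y* ∈ Y*` with
`(1/C₀)‖y*‖² + (1/ε₀)‖R*x* − O*y*‖² ≤ ‖x*‖²`, then for every `z ∈ Z`,
`‖Rz‖² ≤ C₀‖Oz‖² + ε₀‖z‖²`.  Here the Banach-space adjoint `R*x*` is `x* ∘ R`. -/
theorem controllability_of_observability
    {X Y Z : Type*} [NormedAddCommGroup X] [NormedSpace ℝ X]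
    [NormedAddCommGroup Y] [NormedSpace ℝ Y]
    [NormedAddCommGroup Z] [NormedSpace ℝ Z]
    (R : Z →L[ℝ] X) (O : Z →L[ℝ] Y) (C₀ ε₀ : ℝ) (hC : 0 < C₀) (hε : 0 < ε₀)
    (h : ∀ x' : X →L[ℝ] ℝ, ∃ y' : Y →L[ℝ] ℝ,
      (1 / C₀) * ‖y'‖ ^ 2 + (1 / ε₀) * ‖x'.comp R - y'.comp O‖ ^ 2 ≤ ‖x'‖ ^ 2) :
    ∀ z : Z, ‖R z‖ ^ 2 ≤ C₀ * ‖O z‖ ^ 2 + ε₀ * ‖z‖ ^ 2 := by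
  intro z
  obtain ⟨x', hx'_le, hx'_Rz⟩ := exists_dual_vector'' ℝ (R z)
  obtain ⟨y', hy'⟩ := h x'
  simp only [one_div_mul_eq_div] at hy'
  calc ‖R z‖ ^ 2 = ‖x' (R z)‖ ^ 2 := by simp [hx'_Rz]
    _ ≤ ‖x'‖ ^ 2 * (C₀ * ‖O z‖ ^ 2 + ε₀ * ‖z‖ ^ 2) :=
      sq_norm_apply_le_of_observability R O hC hε x' y' hy' z
    _ ≤ C₀ * ‖O z‖ ^ 2 + ε₀ * ‖z‖ ^ 2 :=
      mul_le_of_le_one_left (by positivity) (pow_le_one₀ (norm_nonneg _) hx'_le)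
end

section
/- Let X, Y, Z be Banach spaces, R ∈ L(Z, X), O ∈ L(Z, Y), and C₀ > 0, ε₀ > 0. Suppose ‖Rz‖²_X ≤ C₀‖Oz‖²_Y + ε₀‖z‖²_Z for every z ∈ Z. Then for each x* ∈ X* there exists y* ∈ Y* such that (1/C₀)‖y*‖²_{Y*} + (1/ε₀)‖R*x* − O*y*‖²_{Z*} ≤ ‖x*‖²_{X*}. -/
/-!
Embed `Z` into the `L²` product `Y × Z` by `T z = (√C₀ • O z, √ε₀ • z)`, so that the hypothesis
reads `‖R z‖ ≤ ‖T z‖`. Then `T z ↦ x* (R z)` is a well-defined functional of norm at most `‖x*‖`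
on the range of `T`; Hahn–Banach extends it to a functional `g` on the whole product. Splitting
`g = η ⊕ ζ` gives `‖η‖² + ‖ζ‖² ≤ ‖g‖²` (the dual of `L²` is `L²`), and `y* = √C₀ • η` works since
`x* ∘ R - y* ∘ O = √ε₀ • ζ`.
-/

open WithLp

section Factorization

variable {𝕜 Z X F : Type*} [RCLike 𝕜]
  [NormedAddCommGroup Z] [NormedSpace 𝕜 Z] [NormedAddCommGroup X] [NormedSpace 𝕜 X]
  [NormedAddCommGroup F] [NormedSpace 𝕜 F]

theorem ContinuousLinearMap.exists_comp_eq_comp_of_norm_le (R : Z →L[𝕜] X) (T : Z →L[𝕜] F)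
    (hRT : ∀ z, ‖R z‖ ≤ ‖T z‖) (x' : StrongDual 𝕜 X) :
    ∃ g : StrongDual 𝕜 F, g.comp T = x'.comp R ∧ ‖g‖ ≤ ‖x'‖ := by
  have hker : LinearMap.ker T.toLinearMap ≤ LinearMap.ker (x'.comp R).toLinearMap := by
    intro z hz
    have hTz : T z = 0 := hz
    have hRz : R z = 0 := norm_le_zero_iff.1 <| (hRT z).trans_eq (by rw [hTz, norm_zero])
    simp [hRz]
  let f₀ : LinearMap.range T.toLinearMap →ₗ[𝕜] 𝕜 :=
    (LinearMap.ker _).liftQ _ hker ∘ₗ T.toLinearMap.quotKerEquivRange.symm.toLinearMap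
  have hf₀ : ∀ z, f₀ ⟨T z, LinearMap.mem_range_self _ z⟩ = x' (R z) := fun z =>
    congrArg ((LinearMap.ker _).liftQ _ hker)
      (T.toLinearMap.quotKerEquivRange_symm_apply_image z (LinearMap.mem_range_self _ z))
  have hbound : ∀ v, ‖f₀ v‖ ≤ ‖x'‖ * ‖v‖ := by
    rintro ⟨_, z, rfl⟩
    exact (congrArg norm (hf₀ z)).trans_le ((x'.le_opNorm _).trans (by gcongr; exact hRT z))
  obtain ⟨g, hg, hgnorm⟩ := exists_extension_norm_eq _ (f₀.mkContinuous ‖x'‖ hbound)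
  refine ⟨g, ContinuousLinearMap.ext fun z => ?_,
    hgnorm.trans_le (f₀.mkContinuous_norm_le (norm_nonneg _) hbound)⟩
  exact (hg ⟨T z, LinearMap.mem_range_self _ z⟩).trans (hf₀ z)

end Factorization

section DualL2

variable {E Y Z : Type*} [NormedAddCommGroup E] [NormedSpace ℝ E]
  [NormedAddCommGroup Y] [NormedSpace ℝ Y] [NormedAddCommGroup Z] [NormedSpace ℝ Z]

theorem ContinuousLinearMap.sq_opNorm_le_of_apply_sq_le (φ : StrongDual ℝ E) {d : ℝ}
    (h : ∀ x, ‖x‖ ≤ 1 → φ x ^ 2 ≤ d) : ‖φ‖ ^ 2 ≤ d := by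
  have hd : 0 ≤ d := by simpa using h 0 (by simp)
  have hφ : ‖φ‖ ≤ √d := φ.opNorm_le_of_unit_norm (Real.sqrt_nonneg _) fun x hx =>
    (Real.norm_eq_abs _).trans_le (Real.abs_le_sqrt (h x hx.le))
  calc ‖φ‖ ^ 2 ≤ √d ^ 2 := by gcongr
    _ = d := Real.sq_sqrt hd

theorem sq_norm_add_sq_norm_le_of_apply_toLp (g : StrongDual ℝ (WithLp 2 (Y × Z)))
    (η : StrongDual ℝ Y) (ζ : StrongDual ℝ Z) (hg : ∀ y z, g (toLp 2 (y, z)) = η y + ζ z) :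
    ‖η‖ ^ 2 + ‖ζ‖ ^ 2 ≤ ‖g‖ ^ 2 := by
  have pointwise : ∀ y z, ‖y‖ ≤ 1 → ‖z‖ ≤ 1 → η y ^ 2 + ζ z ^ 2 ≤ ‖g‖ ^ 2 := by
    intro y z hy hz
    set s := η y ^ 2 + ζ z ^ 2 with hs
    have hw : ‖toLp 2 (η y • y, ζ z • z)‖ ≤ √s := by
      rw [prod_norm_eq_of_L2]
      refine Real.sqrt_le_sqrt ?_
      simp only [toLp_fst, toLp_snd, norm_smul, Real.norm_eq_abs, mul_pow, sq_abs]
      nlinarith [pow_le_one₀ (norm_nonneg y) hy (n := 2), pow_le_one₀ (norm_nonneg z) hz (n := 2),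
        sq_nonneg (η y), sq_nonneg (ζ z)]
    have hsg : s ≤ ‖g‖ * √s :=
      calc s = g (toLp 2 (η y • y, ζ z • z)) := by simp [hg, hs, sq]
        _ ≤ ‖g‖ * ‖toLp 2 (η y • y, ζ z • z)‖ := le_of_abs_le (g.le_opNorm _)
        _ ≤ ‖g‖ * √s := by gcongr
    nlinarith [sq_nonneg (‖g‖ - √s), Real.sq_sqrt (by positivity : 0 ≤ s), Real.sqrt_nonneg s,
      norm_nonneg g]
  have hζ : ∀ z, ‖z‖ ≤ 1 → ζ z ^ 2 ≤ ‖g‖ ^ 2 - ‖η‖ ^ 2 := fun z hz => by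
    have := η.sq_opNorm_le_of_apply_sq_le (d := ‖g‖ ^ 2 - ζ z ^ 2) fun y hy => by
      linarith [pointwise y z hy hz]
    linarith
  linarith [ζ.sq_opNorm_le_of_apply_sq_le hζ]

end DualL2

section GraphEmbedding

variable {Y Z : Type*} [NormedAddCommGroup Y] [NormedSpace ℝ Y]
  [NormedAddCommGroup Z] [NormedSpace ℝ Z]

noncomputable def scaledGraphL2 (O : Z →L[ℝ] Y) (a b : ℝ) : Z →L[ℝ] WithLp 2 (Y × Z) :=
  (prodContinuousLinearEquiv 2 ℝ Y Z).symm.toContinuousLinearMap.comp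
    ((a • O).prod (b • ContinuousLinearMap.id ℝ Z))

@[simp]
theorem scaledGraphL2_apply (O : Z →L[ℝ] Y) (a b : ℝ) (z : Z) :
    scaledGraphL2 O a b z = toLp 2 (a • O z, b • z) :=
  rfl

theorem sq_norm_scaledGraphL2 (O : Z →L[ℝ] Y) (a b : ℝ) (z : Z) :
    ‖scaledGraphL2 O a b z‖ ^ 2 = a ^ 2 * ‖O z‖ ^ 2 + b ^ 2 * ‖z‖ ^ 2 := by
  simp [prod_norm_sq_eq_of_L2, norm_smul, mul_pow]

end GraphEmbedding

/-- If `‖Rz‖² ≤ C₀‖Oz‖² + ε₀‖z‖²` for all `z ∈ Z`, then for each `x* ∈ X*` there exists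
`y* ∈ Y*` with `(1/C₀)‖y*‖² + (1/ε₀)‖R*x* − O*y*‖² ≤ ‖x*‖²`.
Here the Banach-space adjoint `R*x*` is `x* ∘ R`. -/
theorem observability_of_controllability
    {X Y Z : Type*} [NormedAddCommGroup X] [NormedSpace ℝ X]
    [NormedAddCommGroup Y] [NormedSpace ℝ Y]
    [NormedAddCommGroup Z] [NormedSpace ℝ Z]
    (R : Z →L[ℝ] X) (O : Z →L[ℝ] Y) (C₀ ε₀ : ℝ) (hC : 0 < C₀) (hε : 0 < ε₀)
    (h : ∀ z : Z, ‖R z‖ ^ 2 ≤ C₀ * ‖O z‖ ^ 2 + ε₀ * ‖z‖ ^ 2) :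
    ∀ x' : X →L[ℝ] ℝ, ∃ y' : Y →L[ℝ] ℝ,
      (1 / C₀) * ‖y'‖ ^ 2 + (1 / ε₀) * ‖x'.comp R - y'.comp O‖ ^ 2 ≤ ‖x'‖ ^ 2 := by
  intro x'
  have hC2 := Real.sq_sqrt hC.le
  have hε2 := Real.sq_sqrt hε.le
  obtain ⟨g, hgT, hg⟩ := R.exists_comp_eq_comp_of_norm_le (scaledGraphL2 O √C₀ √ε₀)
    (fun z => (sq_le_sq₀ (norm_nonneg _) (norm_nonneg _)).1 <| by
      rw [sq_norm_scaledGraphL2, hC2, hε2]; exact h z) x'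
  let toLpL := (prodContinuousLinearEquiv 2 ℝ Y Z).symm.toContinuousLinearMap
  set η := g.comp (toLpL.comp (.inl ℝ Y Z))
  set ζ := g.comp (toLpL.comp (.inr ℝ Y Z))
  have hsplit : ∀ y z, g (toLp 2 (y, z)) = η y + ζ z := fun y z => by
    simp [η, ζ, toLpL, ← map_add, ← toLp_add]
  have hdiff : x'.comp R - (√C₀ • η).comp O = √ε₀ • ζ := by
    ext z
    have := congr($hgT z)
    simp only [ContinuousLinearMap.comp_apply, scaledGraphL2_apply, hsplit, map_smul] at this
    simp [← this]
  refine ⟨√C₀ • η, ?_⟩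
  rw [hdiff, norm_smul, norm_smul, mul_pow, mul_pow, Real.norm_eq_abs, Real.norm_eq_abs, sq_abs,
    sq_abs, hC2, hε2, one_div, one_div, inv_mul_cancel_left₀ hC.ne', inv_mul_cancel_left₀ hε.ne']
  linarith [sq_norm_add_sq_norm_le_of_apply_toLp g η ζ hsplit,
    pow_le_pow_left₀ (norm_nonneg _) hg 2]
end

section
/- Let T > 0 and η ∈ (0,1). Define B = ⋃_{k=1}^{∞} ( T/(k+η), T/k ) ⊂ (0, ∞). Then B is measurable and lim_{h→0⁺} |B ∩ (0, h)| / h = η, where |·| denotes Lebesgue measure. -/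
/-!
The part of `B` below `T / n` is again a union of the same shape, of total length
`∑_{k ≥ n} (T/k - T/(k+η))`; comparing each term `Tη / (k(k+η))` with telescoping differences
gives `η T / n ≤ |B ∩ (0, T/n)| ≤ η T / (n + η - 1)`. So the density quotient tends to `η` along
`h = T/n`, and monotonicity of `h ↦ |B ∩ (0, h)|` fills in the `h` between consecutive `T/n`.
-/

open MeasureTheory Set Filter Topology

theorem hasSum_sub_succ_of_antitone {f : ℕ → ℝ} (hf : Antitone f)
    (hlim : Tendsto f atTop (𝓝 0)) : HasSum (fun n => f n - f (n + 1)) (f 0) := by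
  rw [hasSum_iff_tendsto_nat_of_nonneg (fun n => sub_nonneg.2 (hf n.le_succ))]
  simp_rw [Finset.sum_range_sub']
  simpa using tendsto_const_nhds.sub hlim

theorem hasSum_div_add_sub_div_add_one {c a : ℝ} (hc : 0 ≤ c) (ha : 0 < a) :
    HasSum (fun n : ℕ => c / (n + a) - c / (n + a + 1)) (c / a) := by
  have hf : Antitone fun n : ℕ => c / (n + a) := fun m n hmn =>
    div_le_div_of_nonneg_left hc (by positivity) (by gcongr)
  have hlim : Tendsto (fun n : ℕ => c / (n + a)) atTop (𝓝 0) :=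
    tendsto_const_nhds.div_atTop (tendsto_atTop_add_const_right _ _ tendsto_natCast_atTop_atTop)
  simpa [add_right_comm] using hasSum_sub_succ_of_antitone hf hlim

theorem tendsto_natCast_add_one_div_natCast :
    Tendsto (fun n : ℕ => ((n : ℝ) + 1) / n) atTop (𝓝 1) := by
  have h := tendsto_const_nhds (x := (1 : ℝ)).add tendsto_one_div_atTop_nhds_zero_nat
  rw [add_zero] at h
  refine h.congr' ((eventually_ne_atTop 0).mono fun n hn => ?_)
  field_simp

theorem Monotone.tendsto_div_nhdsGT_zero_of_tendsto_div_natCast {F : ℝ → ℝ} (hF : Monotone F)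
    (hF₀ : ∀ x, 0 ≤ F x) {T L : ℝ} (hT : 0 < T)
    (hlim : Tendsto (fun n : ℕ => F (T / n) / (T / n)) atTop (𝓝 L)) :
    Tendsto (fun h => F h / h) (𝓝[>] 0) (𝓝 L) := by
  -- `T / (m h + 1) < h ≤ T / m h`
  set m : ℝ → ℕ := fun h => ⌊T / h⌋₊
  have hm : Tendsto m (𝓝[>] 0) atTop := by
    refine tendsto_nat_floor_atTop.comp (f := fun h => T / h) ?_
    simpa only [div_eq_mul_inv] using tendsto_inv_nhdsGT_zero.const_mul_atTop hT
  have hlower : Tendsto (fun h => F (T / (m h + 1)) / (T / (m h + 1)) * (m h / (m h + 1)))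
      (𝓝[>] 0) (𝓝 L) := by
    have h := ((tendsto_add_atTop_iff_nat 1).2 hlim).mul (tendsto_natCast_div_add_atTop (1 : ℝ))
    push_cast at h
    rw [mul_one] at h
    exact h.comp hm
  have hupper : Tendsto (fun h => F (T / m h) / (T / m h) * ((m h + 1) / m h))
      (𝓝[>] 0) (𝓝 L) := by
    have h := hlim.mul tendsto_natCast_add_one_div_natCast
    rw [mul_one] at h
    exact h.comp hm
  refine tendsto_of_tendsto_of_tendsto_of_le_of_le' hlower hupper ?_ ?_
  all_goals
    filter_upwards [hm.eventually_ge_atTop 1, self_mem_nhdsWithin] with h hm1 (hh : 0 < h)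
    have hm0 : (0 : ℝ) < m h := by exact_mod_cast hm1
    have hle : h ≤ T / m h := by
      rw [le_div_iff₀ hm0, mul_comm, ← le_div_iff₀ hh]; exact Nat.floor_le (by positivity)
    have hlt : T / (m h + 1) < h := by
      rw [div_lt_iff₀ (by positivity), mul_comm, ← div_lt_iff₀ hh]; exact Nat.lt_floor_add_one _
  · calc F (T / (m h + 1)) / (T / (m h + 1)) * (m h / (m h + 1))
        = F (T / (m h + 1)) / (T / m h) := by field_simp
      _ ≤ F h / (T / m h) := by gcongr; exact hF hlt.le
      _ ≤ F h / h := by gcongr; exact hF₀ h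
  · calc F h / h ≤ F (T / m h) / h := by gcongr; exact hF hle
      _ ≤ F (T / m h) / (T / (m h + 1)) := by gcongr; exact hF₀ _
      _ = F (T / m h) / (T / m h) * ((m h + 1) / m h) := by field_simp

section HarmonicGaps

variable {T η a x : ℝ}

theorem div_sub_div_add_eq (hx : 0 < x) (hxη : 0 < x + η) :
    T / x - T / (x + η) = η * T / (x * (x + η)) := by
  field_simp; ring

theorem mul_div_sub_mul_div_add_one_le (hT : 0 ≤ T) (hη₀ : 0 ≤ η) (hη₁ : η ≤ 1) (hx : 0 < x) :
    η * T / x - η * T / (x + 1) ≤ T / x - T / (x + η) := by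
  have h := div_sub_div_add_eq (T := η * T) hx (by linarith : 0 < x + 1)
  rw [one_mul] at h
  rw [h, div_sub_div_add_eq hx (by linarith)]
  gcongr

theorem div_sub_div_add_le (hT : 0 ≤ T) (hη₀ : 0 ≤ η) (hη₁ : η ≤ 1) (hx : 0 < x + η - 1) :
    T / x - T / (x + η) ≤ η * T / (x + η - 1) - η * T / (x + η - 1 + 1) := by
  have h := div_sub_div_add_eq (T := η * T) hx (by linarith : 0 < x + η - 1 + 1)
  rw [one_mul, sub_add_cancel] at h
  rw [sub_add_cancel, h, div_sub_div_add_eq (by linarith) (by linarith)]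
  exact div_le_div_of_nonneg_left (by positivity) (mul_pos hx (by linarith))
    (by gcongr <;> linarith)

/-- `B = harmonicGaps T η 1`; the offset `a` makes `B ∩ (0, T / (m + 1))` a member of the same
family (`harmonicGaps_inter_Ioo`). -/
def harmonicGaps (T η a : ℝ) : Set ℝ := ⋃ k : ℕ, Ioo (T / (k + a + η)) (T / (k + a))

theorem harmonicGaps_subset_Ioo (hT : 0 < T) (hη : 0 ≤ η) (ha : 0 < a) :
    harmonicGaps T η a ⊆ Ioo 0 (T / a) := by
  refine iUnion_subset fun k => Ioo_subset_Ioo (by positivity) ?_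
  gcongr
  exact le_add_of_nonneg_left (by positivity)

theorem pairwise_disjoint_harmonicGaps (hT : 0 ≤ T) (hη₀ : 0 ≤ η) (hη₁ : η ≤ 1) (ha : 0 < a) :
    Pairwise (Function.onFun Disjoint fun k : ℕ => Ioo (T / (k + a + η)) (T / (k + a))) := by
  refine (pairwise_disjoint_on _).2 fun i j hij =>
    Ioo_disjoint_Ioo.2 ((min_le_right _ _).trans (le_max_of_le_left ?_))
  have : (i : ℝ) + 1 ≤ j := by exact_mod_cast hij
  exact div_le_div_of_nonneg_left hT (by positivity) (by linarith)

theorem harmonicGaps_inter_Ioo (hT : 0 < T) (hη₀ : 0 ≤ η) (hη₁ : η ≤ 1) (ha : 0 < a) (m : ℕ) :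
    harmonicGaps T η a ∩ Ioo 0 (T / (m + a)) = harmonicGaps T η (m + a) := by
  ext y
  simp only [harmonicGaps, mem_inter_iff, mem_iUnion, mem_Ioo]
  constructor
  · rintro ⟨⟨j, hj, hjy⟩, -, hy⟩
    obtain ⟨k, rfl⟩ : ∃ k, j = k + m := by
      refine ⟨j - m, (Nat.sub_add_cancel ?_).symm⟩
      by_contra! hjm
      have : (j : ℝ) + 1 ≤ m := by exact_mod_cast hjm
      have : T / (m + a) ≤ T / (j + a + η) :=
        div_le_div_of_nonneg_left hT.le (by positivity) (by linarith)
      linarith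
    push_cast at hj hjy
    exact ⟨k, by simpa only [add_assoc] using hj, by simpa only [add_assoc] using hjy⟩
  · rintro ⟨k, hk, hky⟩
    refine ⟨⟨k + m, by push_cast; simpa only [add_assoc] using hk,
      by push_cast; simpa only [add_assoc] using hky⟩,
      lt_trans (by positivity) hk, hky.trans_le ?_⟩
    exact div_le_div_of_nonneg_left hT.le (by positivity) (le_add_of_nonneg_left k.cast_nonneg')

theorem hasSum_volume_harmonicGaps (hT : 0 < T) (hη₀ : 0 ≤ η) (hη₁ : η ≤ 1) (ha : 0 < a) :
    HasSum (fun k : ℕ => T / (k + a) - T / (k + a + η)) (volume (harmonicGaps T η a)).toReal := by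
  have hvol := measure_iUnion (μ := volume) (pairwise_disjoint_harmonicGaps hT.le hη₀ hη₁ ha)
    fun _ => measurableSet_Ioo
  have hfin : volume (harmonicGaps T η a) ≠ ⊤ :=
    ((measure_mono (harmonicGaps_subset_Ioo hT hη₀ ha)).trans_lt measure_Ioo_lt_top).ne
  rw [harmonicGaps, hvol] at hfin ⊢
  have hlen (k : ℕ) : 0 ≤ T / (k + a) - T / (k + a + η) :=
    sub_nonneg.2 (div_le_div_of_nonneg_left hT.le (by positivity) (by linarith))
  rw [ENNReal.tsum_toReal_eq fun _ => measure_Ioo_lt_top.ne]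
  simpa only [Real.volume_Ioo, ENNReal.toReal_ofReal, hlen] using ENNReal.hasSum_toReal hfin

theorem mul_div_le_volume_harmonicGaps (hT : 0 < T) (hη₀ : 0 ≤ η) (hη₁ : η ≤ 1) (ha : 0 < a) :
    η * T / a ≤ (volume (harmonicGaps T η a)).toReal :=
  hasSum_le (fun _ => mul_div_sub_mul_div_add_one_le hT.le hη₀ hη₁ (by positivity))
    (hasSum_div_add_sub_div_add_one (by positivity) ha) (hasSum_volume_harmonicGaps hT hη₀ hη₁ ha)

theorem volume_harmonicGaps_le (hT : 0 < T) (hη₀ : 0 ≤ η) (hη₁ : η ≤ 1) (ha : 0 < a + η - 1) :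
    (volume (harmonicGaps T η a)).toReal ≤ η * T / (a + η - 1) :=
  hasSum_le
    (fun k => by
      simpa only [add_sub_assoc, add_assoc] using
        div_sub_div_add_le (x := k + a) hT.le hη₀ hη₁ (by linarith [k.cast_nonneg (α := ℝ)]))
    (hasSum_volume_harmonicGaps hT hη₀ hη₁ (by linarith))
    (hasSum_div_add_sub_div_add_one (by positivity) ha)

theorem tendsto_volume_harmonicGaps_div (hT : 0 < T) (hη₀ : 0 < η) (hη₁ : η ≤ 1) :
    Tendsto (fun n : ℕ => (volume (harmonicGaps T η n)).toReal / (T / n)) atTop (𝓝 η) := by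
  have hupper : Tendsto (fun n : ℕ => η * (n / (n + (η - 1)))) atTop (𝓝 η) := by
    simpa using (tendsto_natCast_div_add_atTop (η - 1)).const_mul η
  refine tendsto_of_tendsto_of_tendsto_of_le_of_le' tendsto_const_nhds hupper ?_ ?_
  all_goals
    filter_upwards [eventually_ge_atTop 1] with n hn
    have hn : (1 : ℝ) ≤ n := by exact_mod_cast hn
  · calc η = η * T / n / (T / n) := by field_simp
      _ ≤ _ := by gcongr; exact mul_div_le_volume_harmonicGaps hT hη₀.le hη₁ (by positivity)
  · calc _ ≤ η * T / (n + η - 1) / (T / n) := by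
          gcongr; exact volume_harmonicGaps_le hT hη₀.le hη₁ (by linarith)
      _ = η * (n / (n + (η - 1))) := by
          have : (n : ℝ) + (η - 1) ≠ 0 := by linarith
          rw [add_sub_assoc]
          field_simp
end HarmonicGaps

/-- The set `B = ⋃_{k≥1} (T/(k+η), T/k)` is measurable and has Lebesgue density exactly
`η` at `0`, i.e. `|B ∩ (0,h)|/h → η` as `h → 0⁺`. -/
theorem density_of_union_intervals (T η : ℝ) (hT : 0 < T) (hη : η ∈ Set.Ioo (0 : ℝ) 1) :
    MeasurableSet (⋃ k : ℕ, Set.Ioo (T / ((k : ℝ) + 1 + η)) (T / ((k : ℝ) + 1)))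
      ∧ Tendsto
          (fun h : ℝ =>
            (volume ((⋃ k : ℕ, Set.Ioo (T / ((k : ℝ) + 1 + η)) (T / ((k : ℝ) + 1)))
                ∩ Set.Ioo 0 h)).toReal / h)
          (nhdsWithin 0 (Set.Ioi 0)) (nhds η) := by
  obtain ⟨hη₀, hη₁⟩ := hη
  refine ⟨MeasurableSet.iUnion fun _ => measurableSet_Ioo, ?_⟩
  set F : ℝ → ℝ := fun h => (volume (harmonicGaps T η 1 ∩ Ioo 0 h)).toReal
  have hF : Monotone F := fun x y hxy =>
    ENNReal.toReal_mono ((measure_mono inter_subset_right).trans_lt measure_Ioo_lt_top).ne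
      (measure_mono (inter_subset_inter_right _ (Ioo_subset_Ioo_right hxy)))
  refine hF.tendsto_div_nhdsGT_zero_of_tendsto_div_natCast
    (fun _ => ENNReal.toReal_nonneg) hT ?_
  refine (tendsto_add_atTop_iff_nat 1).1 ?_
  convert (tendsto_add_atTop_iff_nat 1).2 (tendsto_volume_harmonicGaps_div hT hη₀ hη₁.le)
    using 3 with m
  push_cast
  rw [← harmonicGaps_inter_Ioo hT hη₀.le hη₁.le one_pos m]
end
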